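/- arXiv:2308.01072 — 3 statements merged into one kernel-verified Lean document; each statement's English description precedes it below -/
import Mathlib

section
/- Let L be a countable first-order language, let M be an L-structure, let η be a nonempty set, let e : η → M be a function, and let μ be a fine, countably complete, normal ultrafilter on [η]^ω. Suppose f : [η]^ω → M is a function such that for μ-almost every σ, f(σ) belongs to the substructure of M generated by the image e''σ. Then there exist n ∈ ℕ, an L-term t in n variables, and a_1, …, a_n ∈ η such that f(σ) = t^M(e(a_1), …, e(a_n)) for μ-almost every σ. In particular, f is μ-almost everywhere equal to a constant, and that constant belongs to the substructure of M generated by e''η. -/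
open FirstOrder FirstOrder.Language

/-- `[η]^ω`: the countable subsets of `η`. -/
def CtbleSubsets (η : Type*) : Type _ := {σ : Set η // σ.Countable}

/-- An ultrafilter on `[η]^ω` is *fine* if for every `a ∈ η`, almost every `σ` contains `a`. -/
def IsFine {η : Type*} (μ : Ultrafilter (CtbleSubsets η)) : Prop :=
  ∀ a : η, {σ : CtbleSubsets η | a ∈ σ.1} ∈ μ

/-- An ultrafilter is *countably complete* if it is closed under countable intersections. -/
def IsCountablyComplete {α : Type*} (μ : Ultrafilter α) : Prop :=
  ∀ A : ℕ → Set α, (∀ n, A n ∈ μ) → (⋂ n, A n) ∈ μ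

section Helpers

open Filter

private theorem ae_const_of_countable {α β : Type*} [Countable β] (μ : Ultrafilter α)
    (hcc : IsCountablyComplete μ) (g : α → β) : ∃ b : β, {x | g x = b} ∈ μ := by
  obtain ⟨x0, -⟩ := Ultrafilter.nonempty_of_mem (Filter.univ_mem (f := (μ : Filter α)))
  have : Nonempty β := ⟨g x0⟩
  obtain ⟨u, hu⟩ := exists_surjective_nat β
  by_contra h
  push_neg at h
  have hA : ∀ n : ℕ, {x | g x ≠ u n} ∈ μ := fun n =>
    (Ultrafilter.compl_mem_iff_notMem).2 (h (u n))
  have h2 : (⋂ n, {x | g x ≠ u n}) ∈ μ := hcc _ hA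
  have h3 : (⋂ n, {x | g x ≠ u n}) = (∅ : Set α) := by
    ext x
    simp only [Set.mem_iInter, Set.mem_setOf_eq, Set.mem_empty_iff_false, iff_false, not_forall,
      not_not]
    obtain ⟨n, hn⟩ := hu (g x)
    exact ⟨n, hn.symm⟩
  rw [h3] at h2
  exact Ultrafilter.empty_notMem h2

private theorem realize_congr_var {L : Language} {M : Type*} [L.Structure M] {α : Type*}
    [DecidableEq α] (t : L.Term α) {v w : α → M} (h : ∀ k ∈ t.varFinset, v k = w k) :
    t.realize v = t.realize w := by
  induction t with
  | var i => exact h i (Finset.mem_singleton_self i)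
  | func F ts ih =>
    simp only [Term.realize]
    congr 1
    funext i
    exact ih i fun k hk =>
      h k (Finset.mem_biUnion.2 ⟨i, Finset.mem_univ i, hk⟩)

end Helpers

/-- An ultrafilter on `[η]^ω` is *normal* if every choice function (a.e.) is a.e. constant. -/


def IsNormal {η : Type*} (μ : Ultrafilter (CtbleSubsets η)) : Prop :=
  ∀ f : CtbleSubsets η → η, {σ : CtbleSubsets η | f σ ∈ σ.1} ∈ μ →
    ∃ a : η, {σ : CtbleSubsets η | f σ = a} ∈ μ

/-- If `f σ` lies in the substructure generated by `e '' σ` for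
`μ`-almost every `σ`, then `f` is `μ`-a.e. equal to the value of a fixed term at fixed
parameters from `η`; in particular `f` is `μ`-a.e. constant, with constant value in
the substructure generated by `e '' η`. -/
theorem term_representation {L : Language} [Countable L.Symbols]
    {M : Type*} [L.Structure M] {η : Type*} [Nonempty η] (e : η → M)
    (μ : Ultrafilter (CtbleSubsets η))
    (hfine : IsFine μ) (hcc : IsCountablyComplete μ) (hnorm : IsNormal μ)
    (f : CtbleSubsets η → M)
    (hf : {σ : CtbleSubsets η | f σ ∈ Substructure.closure L (e '' σ.1)} ∈ μ) :
    (∃ (n : ℕ) (t : L.Term (Fin n)) (a : Fin n → η),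
        {σ : CtbleSubsets η | f σ = t.realize (fun i => e (a i))} ∈ μ) ∧
    ∃ b : M, b ∈ Substructure.closure L (Set.range e) ∧
      {σ : CtbleSubsets η | f σ = b} ∈ μ := by
  classical
  obtain ⟨a0⟩ := (inferInstance : Nonempty η)
  set S : Set (CtbleSubsets η) :=
    {σ | f σ ∈ Substructure.closure L (e '' σ.1)} ∩ {σ | a0 ∈ σ.1} with hSdef
  have hS : S ∈ μ := Filter.inter_mem hf (hfine a0)
  -- Step 1: extract (term over ℕ, parameter function) witnesses.
  have hw : ∀ σ ∈ S, ∃ (t : L.Term ℕ) (a : ℕ → η), (∀ k, a k ∈ σ.1) ∧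
      t.realize (fun k => e (a k)) = f σ := by
    intro σ hσ
    obtain ⟨t0, ht0⟩ := (Substructure.mem_closure_iff_exists_term).1 hσ.1
    have hc : (e '' σ.1).Countable := (σ.2.image e)
    have : Countable ↥(e '' σ.1) := hc.to_subtype
    obtain ⟨q, hq⟩ := Countable.exists_injective_nat ↥(e '' σ.1)
    have hp : ∀ x : ↥(e '' σ.1), ∃ a : η, a ∈ σ.1 ∧ e a = x := by
      rintro ⟨x, hx⟩
      obtain ⟨a, ha, rfl⟩ := hx
      exact ⟨a, ha, rfl⟩
    choose p hp1 hp2 using hp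
    refine ⟨t0.relabel q, fun k => if h : ∃ x, q x = k then p h.choose else a0, ?_, ?_⟩
    · intro k
      by_cases h : ∃ x, q x = k
      · simp only [dif_pos h]; exact hp1 _
      · simp only [dif_neg h]; exact hσ.2
    · rw [Term.realize_relabel, ← ht0]
      congr 1
      funext x
      have h : ∃ x', q x' = q x := ⟨x, rfl⟩
      simp only [Function.comp_apply, dif_pos h]
      have hx : h.choose = x := hq h.choose_spec
      rw [hx, hp2]
  -- Total witness function.
  let W : CtbleSubsets η → L.Term ℕ × (ℕ → η) := fun σ =>
    if h : σ ∈ S then ⟨(hw σ h).choose, (hw σ h).choose_spec.choose⟩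
    else ⟨Term.var 0, fun _ => a0⟩
  have hW : ∀ σ ∈ S, (∀ k, (W σ).2 k ∈ σ.1) ∧
      (W σ).1.realize (fun k => e ((W σ).2 k)) = f σ := by
    intro σ h
    simp only [W, dif_pos h]
    exact (hw σ h).choose_spec.choose_spec
  -- Step 2: the term is a.e. constant.
  obtain ⟨t, ht⟩ := ae_const_of_countable μ hcc (fun σ => (W σ).1)
  -- Step 3: each parameter is a.e. constant, by normality.
  have hB : ∀ k : ℕ, ∃ a : η, {σ : CtbleSubsets η | (W σ).2 k = a} ∈ μ := by
    intro k
    refine hnorm (fun σ => (W σ).2 k) (Filter.mem_of_superset hS ?_)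
    intro σ hσ
    exact (hW σ hσ).1 k
  choose aa haa using hB
  -- The big measure-one set.
  have hT : (S ∩ {σ | (W σ).1 = t} ∩ ⋂ k, {σ : CtbleSubsets η | (W σ).2 k = aa k}) ∈ μ :=
    Filter.inter_mem (Filter.inter_mem hS ht) (hcc _ haa)
  set T := S ∩ {σ | (W σ).1 = t} ∩ ⋂ k, {σ : CtbleSubsets η | (W σ).2 k = aa k} with hTdef
  have key : ∀ σ ∈ T, f σ = t.realize (fun k => e (aa k)) := by
    rintro σ ⟨⟨hσS, hσt⟩, hσa⟩
    rw [← (hW σ hσS).2]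
    have h1 : (W σ).1 = t := hσt
    have h2 : ∀ k, (W σ).2 k = aa k := fun k => Set.mem_iInter.1 hσa k
    rw [h1]
    congr 1
    funext k
    rw [h2]
  constructor
  · -- term representation with variables in Fin n
    refine ⟨(t.varFinset.sup id) + 1, t.relabel (fun k =>
      if h : k < (t.varFinset.sup id) + 1 then (⟨k, h⟩ : Fin _) else ⟨0, Nat.succ_pos _⟩),
      fun i => aa i.1, ?_⟩
    refine Filter.mem_of_superset hT ?_
    intro σ hσ
    show f σ = _
    rw [key σ hσ, Term.realize_relabel]
    refine realize_congr_var t ?_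
    intro k hk
    have hlt : k < (t.varFinset.sup id) + 1 :=
      Nat.lt_succ_of_le (Finset.le_sup (f := id) hk)
    simp only [Function.comp_apply, dif_pos hlt]
  · refine ⟨t.realize (fun k => e (aa k)), ?_, Filter.mem_of_superset hT key⟩
    exact Term.realize_mem t _ fun k => Substructure.subset_closure ⟨aa k, rfl⟩
end

section
/- Let L be a countable first-order language, let M be an L-structure, let η be a nonempty set, let e : η → M be a function, and let μ be a fine, countably complete, normal ultrafilter on [η]^ω. For an element b ∈ M, the following are equivalent: (1) b belongs to the substructure of M generated by e''η; (2) there exists a function f : [η]^ω → M such that for μ-almost every σ, f(σ) belongs to the substructure of M generated by e''σ, and f(σ) = b for μ-almost every σ. Consequently, the assignment sending the μ-equivalence class of such an f to its μ-almost-everywhere constant value is a well-defined bijection from the set of μ-equivalence classes of functions f with f(σ) ∈ (substructure generated by e''σ) for μ-almost every σ, onto the substructure of M generated by e''η. -/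
open FirstOrder FirstOrder.Language

/-- The functions `f : [η]^ω → M` with `f σ` in the substructure generated by `e '' σ`
for `μ`-almost every `σ`. -/
def GoodFun (L : Language) {M : Type*} [L.Structure M] {η : Type*} (e : η → M)
    (μ : Ultrafilter (CtbleSubsets η)) : Type _ :=
  {f : CtbleSubsets η → M //
    {σ : CtbleSubsets η | f σ ∈ Substructure.closure L (e '' σ.1)} ∈ μ}

/-- `μ`-equivalence: two functions are identified if they agree `μ`-almost everywhere. -/
def germSetoid (L : Language) {M : Type*} [L.Structure M] {η : Type*} (e : η → M)
    (μ : Ultrafilter (CtbleSubsets η)) : Setoid (GoodFun L e μ) where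
  r f g := {σ : CtbleSubsets η | f.1 σ = g.1 σ} ∈ μ
  iseqv := by
    constructor
    · intro f
      have h : {σ : CtbleSubsets η | f.1 σ = f.1 σ} = Set.univ := by
        ext σ; simp
      rw [h]
      exact Filter.univ_mem
    · intro f g h
      exact Filter.mem_of_superset h fun σ hσ => hσ.symm
    · intro f g h h1 h2
      exact Filter.mem_of_superset (Filter.inter_mem h1 h2) fun σ hσ => hσ.1.trans hσ.2

set_option linter.unusedSectionVars false
section Aux
variable {L : Language} {M : Type*} [L.Structure M] {η : Type*}

theorem mem_closure_image_iff' (e : η → M) {s : Set η} (hs : s.Nonempty) {b : M} :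
    b ∈ Substructure.closure L (e '' s) ↔
      ∃ t : L.Term ℕ, ∃ w : ℕ → η, (∀ k, w k ∈ s) ∧ t.realize (e ∘ w) = b := by
  constructor
  · intro hb
    obtain ⟨a₀, ha₀⟩ := hs
    refine Substructure.closure_induction hb ?base @?func
    case base =>
      rintro x ⟨a, ha, rfl⟩
      exact ⟨Term.var 0, fun _ => a, fun _ => ha, rfl⟩
    case func =>
      intro m F x hx
      choose t w hw ht using hx
      rcases Nat.eq_zero_or_pos m with rfl | hm
      · refine ⟨Term.func F Fin.elim0, fun _ => a₀, fun _ => ha₀, ?_⟩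
        simp only [Term.realize_func]
        congr 1
        exact funext fun i => i.elim0
      · refine ⟨Term.func F (fun i => (t i).relabel (fun k => i.val + k * m)),
          fun j => w ⟨j % m, Nat.mod_lt _ hm⟩ (j / m), fun j => hw _ _, ?_⟩
        simp only [Term.realize_func, Term.realize_relabel]
        congr 1
        funext i
        rw [← ht i]
        congr 1
        funext k
        simp only [Function.comp_apply]
        have h1 : (⟨(i.val + k * m) % m, Nat.mod_lt _ hm⟩ : Fin m) = i := by
          apply Fin.ext
          simp only [Nat.add_mul_mod_self_right]
          exact Nat.mod_eq_of_lt i.2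
        have h2 : (i.val + k * m) / m = k := by
          rw [Nat.add_mul_div_right _ _ hm, Nat.div_eq_of_lt i.2, Nat.zero_add]
        rw [h1, h2]
  · rintro ⟨t, w, hw, rfl⟩
    exact t.realize_mem _ fun k => Substructure.subset_closure ⟨w k, hw k, rfl⟩

/-- pigeonhole for countably complete ultrafilters -/
theorem cc_pigeonhole {α β : Type*} [Countable β] (μ : Ultrafilter α)
    (hcc : IsCountablyComplete μ) (g : α → β) : ∃ c : β, {x | g x = c} ∈ μ := by
  by_contra h
  push_neg at h
  obtain ⟨enc, henc⟩ := Countable.exists_injective_nat β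
  have hA : ∀ n : ℕ, {x | enc (g x) ≠ n} ∈ μ := by
    intro n
    by_cases hc : ∃ c : β, enc c = n
    · obtain ⟨c, rfl⟩ := hc
      have : {x | enc (g x) ≠ enc c} = {x | g x = c}ᶜ := by
        ext x; simp [henc.ne_iff]
      rw [this]
      exact Ultrafilter.compl_mem_iff_notMem.2 (h c)
    · have : {x | enc (g x) ≠ n} = Set.univ := by
        ext x; simp only [Set.mem_setOf_eq, Set.mem_univ, iff_true]
        exact fun he => hc ⟨g x, he⟩
      rw [this]; exact Filter.univ_mem
  have := hcc _ hA
  obtain ⟨x, hx⟩ := Ultrafilter.nonempty_of_mem this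
  simp only [Set.mem_iInter, Set.mem_setOf_eq] at hx
  exact hx (enc (g x)) rfl

variable [Countable L.Symbols] [Nonempty η] (e : η → M) (μ : Ultrafilter (CtbleSubsets η))

/-- Step B: every a.e.-good function is a.e. constant with value in the big hull. -/
theorem goodfun_ae_const (hfine : IsFine μ) (hcc : IsCountablyComplete μ)
    (hnorm : IsNormal μ) (f : CtbleSubsets η → M)
    (hf : {σ : CtbleSubsets η | f σ ∈ Substructure.closure L (e '' σ.1)} ∈ μ) :
    ∃ b : M, b ∈ Substructure.closure L (Set.range e) ∧
      {σ : CtbleSubsets η | f σ = b} ∈ μ := by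
  obtain ⟨a₀⟩ := ‹Nonempty η›
  set G : Set (CtbleSubsets η) :=
    {σ | f σ ∈ Substructure.closure L (e '' σ.1)} ∩ {σ | a₀ ∈ σ.1} with hG
  have hGμ : G ∈ μ := Filter.inter_mem hf (hfine a₀)
  have hch : ∀ σ : CtbleSubsets η, ∃ (t : L.Term ℕ) (w : ℕ → η),
      σ ∈ G → (∀ k, w k ∈ σ.1) ∧ t.realize (e ∘ w) = f σ := by
    intro σ
    by_cases hσ : σ ∈ G
    · obtain ⟨t, w, hw, ht⟩ := (mem_closure_image_iff' e ⟨a₀, hσ.2⟩).1 hσ.1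
      exact ⟨t, w, fun _ => ⟨hw, ht⟩⟩
    · exact ⟨Term.var 0, fun _ => a₀, fun h => absurd h hσ⟩
  choose T W hTW using hch
  obtain ⟨t, ht⟩ := cc_pigeonhole μ hcc T
  have hA : G ∩ {σ | T σ = t} ∈ μ := Filter.inter_mem hGμ ht
  have hWk : ∀ k : ℕ, ∃ a : η, {σ : CtbleSubsets η | W σ k = a} ∈ μ := by
    intro k
    apply hnorm
    exact Filter.mem_of_superset hGμ fun σ hσ => ((hTW σ hσ).1 k)
  choose a ha using hWk
  have hB : (⋂ k, {σ : CtbleSubsets η | W σ k = a k}) ∈ μ := hcc _ ha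
  refine ⟨t.realize (e ∘ a), ?_, ?_⟩
  · exact t.realize_mem _ fun k => Substructure.subset_closure (Set.mem_range_self _)
  · refine Filter.mem_of_superset (Filter.inter_mem hA hB) ?_
    rintro σ ⟨⟨hσG, hσT⟩, hσB⟩
    simp only [Set.mem_iInter, Set.mem_setOf_eq] at hσB hσT ⊢
    have h1 : (T σ).realize (e ∘ W σ) = f σ := (hTW σ hσG).2
    rw [← h1, hσT]
    congr 1
    funext k
    simp [hσB k]

/-- constants in the big hull are a.e. in the small hulls -/
theorem const_good (hfine : IsFine μ) (hcc : IsCountablyComplete μ) {b : M}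
    (hb : b ∈ Substructure.closure L (Set.range e)) :
    {σ : CtbleSubsets η | b ∈ Substructure.closure L (e '' σ.1)} ∈ μ := by
  rw [← Set.image_univ] at hb
  obtain ⟨t, w, -, ht⟩ := (mem_closure_image_iff' e Set.univ_nonempty).1 hb
  have hC : (⋂ k, {σ : CtbleSubsets η | w k ∈ σ.1}) ∈ μ := hcc _ fun k => hfine (w k)
  refine Filter.mem_of_superset hC ?_
  intro σ hσ
  simp only [Set.mem_iInter, Set.mem_setOf_eq] at hσ ⊢
  rw [← ht]
  exact t.realize_mem _ fun k => Substructure.subset_closure ⟨w k, hσ k, rfl⟩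

end Aux

/-- `b` lies in the substructure generated by `e '' η` iff `b` is the
`μ`-a.e. value of some function `f` with `f σ` in the substructure generated by `e '' σ`
`μ`-a.e.; and taking `μ`-a.e. values is a well-defined bijection from the `μ`-classes of
such functions onto the substructure generated by `e '' η`. -/
theorem germ_bijection {L : Language} [Countable L.Symbols]
    {M : Type*} [L.Structure M] {η : Type*} [Nonempty η] (e : η → M)
    (μ : Ultrafilter (CtbleSubsets η))
    (hfine : IsFine μ) (hcc : IsCountablyComplete μ) (hnorm : IsNormal μ) :
    (∀ b : M, b ∈ Substructure.closure L (Set.range e) ↔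
      ∃ f : CtbleSubsets η → M,
        ({σ : CtbleSubsets η | f σ ∈ Substructure.closure L (e '' σ.1)} ∈ μ) ∧
        {σ : CtbleSubsets η | f σ = b} ∈ μ) ∧
    ∃ Φ : Quotient (germSetoid L e μ) → ↥(Substructure.closure L (Set.range e)),
      Function.Bijective Φ ∧
      ∀ (f : GoodFun L e μ) (b : M),
        ({σ : CtbleSubsets η | f.1 σ = b} ∈ μ) →
          (Φ (Quotient.mk (germSetoid L e μ) f) : M) = b := by
  have uniq : ∀ (g : CtbleSubsets η → M) (b b' : M),
      {σ : CtbleSubsets η | g σ = b} ∈ μ → {σ : CtbleSubsets η | g σ = b'} ∈ μ → b = b' := by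
    intro g b b' h1 h2
    obtain ⟨σ, hσ1, hσ2⟩ := Ultrafilter.nonempty_of_mem (Filter.inter_mem h1 h2)
    exact hσ1.symm.trans hσ2
  constructor
  · intro b
    constructor
    · intro hb
      refine ⟨fun _ => b, const_good e μ hfine hcc hb, Filter.univ_mem' fun _ => rfl⟩
    · rintro ⟨f, h1, h2⟩
      obtain ⟨σ, hσ1, hσ2⟩ := Ultrafilter.nonempty_of_mem (Filter.inter_mem h1 h2)
      rw [← hσ2]
      exact Substructure.closure_mono (Set.image_subset_range e σ.1) hσ1
  · have key : ∀ f : GoodFun L e μ, ∃ b : M,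
        b ∈ Substructure.closure L (Set.range e) ∧ {σ : CtbleSubsets η | f.1 σ = b} ∈ μ :=
      fun f => goodfun_ae_const e μ hfine hcc hnorm f.1 f.2
    choose val hval1 hval2 using key
    have hcongr : ∀ f g : GoodFun L e μ, (germSetoid L e μ).r f g → val f = val g := by
      intro f g h
      obtain ⟨σ, ⟨hσ1, hσ2⟩, hσ3⟩ :=
        Ultrafilter.nonempty_of_mem (Filter.inter_mem (Filter.inter_mem (hval2 f) (hval2 g)) h)
      exact hσ1.symm.trans (hσ3.trans hσ2)
    refine ⟨Quotient.lift (fun f => (⟨val f, hval1 f⟩ : ↥(Substructure.closure L (Set.range e))))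
      (fun f g h => Subtype.ext (hcongr f g h)), ⟨?_, ?_⟩, ?_⟩
    · intro q1 q2
      induction q1 using Quotient.ind
      induction q2 using Quotient.ind
      rename_i f g
      intro h
      have hv : val f = val g := congrArg Subtype.val h
      apply Quotient.sound
      show {σ : CtbleSubsets η | f.1 σ = g.1 σ} ∈ μ
      refine Filter.mem_of_superset (Filter.inter_mem (hval2 f) (hval2 g)) ?_
      rintro σ ⟨h1, h2⟩
      exact h1.trans (hv ▸ h2.symm)
    · rintro ⟨b, hb⟩
      refine ⟨Quotient.mk _ ⟨fun _ => b, const_good e μ hfine hcc hb⟩, ?_⟩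
      apply Subtype.ext
      exact uniq _ _ b (hval2 _) (Filter.univ_mem' fun _ => rfl)
    · intro f b hb
      exact uniq f.1 (val f) b (hval2 f) hb
end

section
/- Let L be a countable first-order language, let M be an L-structure with the property that for every subset S of M the substructure generated by S is an elementary substructure of M, let η be a nonempty set, let e : η → M be a function, and let μ be a fine, countably complete, normal ultrafilter on [η]^ω. Let φ(x) be an L-formula in one free variable and let f : [η]^ω → M be a function such that for μ-almost every σ, f(σ) belongs to the substructure H_σ of M generated by e''σ. Let b ∈ M be the μ-almost-everywhere constant value of f. Then {σ ∈ [η]^ω : H_σ ⊨ φ(f(σ))} belongs to μ if and only if M ⊨ φ(b). -/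
open FirstOrder FirstOrder.Language

/-- **a Łoś-type lemma.** Suppose every generated substructure of `M` is
elementary.  If `f σ` lies in the substructure `H_σ` generated by `e '' σ` for `μ`-almost
every `σ` and `b` is the `μ`-a.e. constant value of `f`, then `H_σ ⊨ φ(f σ)` for
`μ`-almost every `σ` iff `M ⊨ φ(b)`. -/
theorem los_for_hulls {L : Language} [Countable L.Symbols]
    {M : Type*} [L.Structure M]
    (helem : ∀ S : Set M, (Substructure.closure L S).IsElementary)
    {η : Type*} [Nonempty η] (e : η → M)
    (μ : Ultrafilter (CtbleSubsets η))
    (hfine : IsFine μ) (hcc : IsCountablyComplete μ) (hnorm : IsNormal μ)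
    (φ : L.Formula (Fin 1)) (f : CtbleSubsets η → M)
    (hf : {σ : CtbleSubsets η | f σ ∈ Substructure.closure L (e '' σ.1)} ∈ μ)
    (b : M) (hb : {σ : CtbleSubsets η | f σ = b} ∈ μ) :
    {σ : CtbleSubsets η | ∃ h : f σ ∈ Substructure.closure L (e '' σ.1),
        φ.Realize (fun _ : Fin 1 =>
          (⟨f σ, h⟩ : ↥(Substructure.closure L (e '' σ.1))))} ∈ μ ↔
      φ.Realize (fun _ : Fin 1 => b) := by
  have key : ∀ σ : CtbleSubsets η, f σ = b →
      ∀ h : f σ ∈ Substructure.closure L (e '' σ.1),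
      (φ.Realize (fun _ : Fin 1 =>
          (⟨f σ, h⟩ : ↥(Substructure.closure L (e '' σ.1)))) ↔
        φ.Realize (fun _ : Fin 1 => b)) := by
    intro σ hσ h
    have := helem (e '' σ.1) φ (fun _ : Fin 1 => ⟨f σ, h⟩)
    rw [← this]
    have : ((↑) : _ → M) ∘ (fun _ : Fin 1 => (⟨f σ, h⟩ :
        ↥(Substructure.closure L (e '' σ.1)))) = fun _ : Fin 1 => b := by
      funext i; simp [hσ]
    rw [this]
  constructor
  · intro hmem
    have hall : {σ : CtbleSubsets η | f σ = b} ∩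
        {σ : CtbleSubsets η | ∃ h : f σ ∈ Substructure.closure L (e '' σ.1),
          φ.Realize (fun _ : Fin 1 =>
            (⟨f σ, h⟩ : ↥(Substructure.closure L (e '' σ.1))))} ∈ μ :=
      μ.toFilter.inter_sets hb hmem
    obtain ⟨σ, hσb, h, hφ⟩ := μ.nonempty_of_mem hall
    exact (key σ hσb h).mp hφ
  · intro hφ
    have hall : {σ : CtbleSubsets η | f σ = b} ∩
        {σ : CtbleSubsets η | f σ ∈ Substructure.closure L (e '' σ.1)} ∈ μ :=
      μ.toFilter.inter_sets hb hf
    refine μ.toFilter.mem_of_superset hall ?_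
    rintro σ ⟨hσb, hσm⟩
    exact ⟨hσm, (key σ hσb hσm).mpr hφ⟩
end
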